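/- Let G : ℝ → ℝ satisfy G(x) > 0 and F(G(x)) = x for all x ∈ (0, 1/e). Then as x → 0⁺, log(1/x) = 1/(2·G(x)²) + O(log log(1/x)); that is, the function x ↦ log(1/x) − 1/(2·G(x)²) is O(log log(1/x)) as x → 0⁺. -/

import Mathlib

open Real Set Filter

/-- Standard normal density. -/
noncomputable def stdNormalPDF (x : ℝ) : ℝ :=
  Real.exp (-x ^ 2 / 2) / Real.sqrt (2 * Real.pi)

/-- `F x = ∫_0^x φ(1/v + v/2) dv`. -/
noncomputable def F (x : ℝ) : ℝ :=
  ∫ v in (0 : ℝ)..x, stdNormalPDF (1 / v + v / 2)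

/-!
For `0 < y ≤ 1/2` the integrand of `F` on `(0, y]` is at most `exp (-1/(2y²))`, and on the
short interval `[y - y³, y]` at least `exp (-1/(2y²) - 8)`, so
`exp (-1/(2y²) - 8) y³ ≤ F y ≤ exp (-1/(2y²)) y`. Taking logarithms at `y = G x`,
`log (1/x) - 1/(2y²)` lies between `0` and `8 + 3 log (1/y)`, and `1/y² ≤ 2 log (1/x)` turns
`log (1/y)` into `O(log log (1/x))`.
-/

open MeasureTheory

lemma one_le_sqrt_two_mul_pi : 1 ≤ √(2 * π) :=
  Real.one_le_sqrt.mpr (by linarith [pi_gt_three])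

lemma sqrt_two_mul_pi_le_exp_one : √(2 * π) ≤ exp 1 :=
  (Real.sqrt_le_left (exp_pos 1).le).mpr (by nlinarith [pi_lt_d2, exp_one_gt_d9])

lemma stdNormalPDF_nonneg (x : ℝ) : 0 ≤ stdNormalPDF x := by
  unfold stdNormalPDF; positivity

lemma stdNormalPDF_le_exp (x : ℝ) : stdNormalPDF x ≤ exp (-x ^ 2 / 2) :=
  div_le_self (exp_pos _).le one_le_sqrt_two_mul_pi

lemma exp_sub_one_le_stdNormalPDF (x : ℝ) : exp (-x ^ 2 / 2 - 1) ≤ stdNormalPDF x := by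
  rw [exp_sub]
  exact div_le_div_of_nonneg_left (exp_pos _).le (by positivity) sqrt_two_mul_pi_le_exp_one

lemma continuous_stdNormalPDF : Continuous stdNormalPDF := by
  unfold stdNormalPDF; fun_prop

lemma stdNormalPDF_le_one (x : ℝ) : stdNormalPDF x ≤ 1 :=
  (stdNormalPDF_le_exp x).trans (exp_le_one_iff.mpr (by nlinarith [sq_nonneg x]))

lemma intervalIntegrable_stdNormalPDF_comp {g : ℝ → ℝ} (hg : Measurable g) (a b : ℝ) :
    IntervalIntegrable (fun v ↦ stdNormalPDF (g v)) volume a b := by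
  rw [intervalIntegrable_iff]
  refine Measure.integrableOn_of_bounded (M := 1) measure_Ioc_lt_top.ne
    (continuous_stdNormalPDF.measurable.comp hg).aestronglyMeasurable ?_
  filter_upwards with v
  rw [norm_of_nonneg (stdNormalPDF_nonneg _)]
  exact stdNormalPDF_le_one _

lemma intervalIntegrable_F_integrand (a b : ℝ) :
    IntervalIntegrable (fun v ↦ stdNormalPDF (1 / v + v / 2)) volume a b :=
  intervalIntegrable_stdNormalPDF_comp (by fun_prop) a b

lemma F_sub_F (a b : ℝ) : F b - F a = ∫ v in a..b, stdNormalPDF (1 / v + v / 2) :=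
  intervalIntegral.integral_interval_sub_left (intervalIntegrable_F_integrand _ _)
    (intervalIntegrable_F_integrand _ _)

lemma F_mono : Monotone F := by
  intro a b hab
  have := intervalIntegral.integral_nonneg (μ := volume) hab
    fun v _ ↦ stdNormalPDF_nonneg (1 / v + v / 2)
  linarith [F_sub_F a b]

lemma F_nonneg {y : ℝ} (hy : 0 ≤ y) : 0 ≤ F y := by
  simpa [F] using F_mono hy

lemma sq_one_div_add_half_div_two {v : ℝ} (hv : v ≠ 0) :
    (1 / v + v / 2) ^ 2 / 2 = 1 / (2 * v ^ 2) + 1 / 2 + v ^ 2 / 8 := by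
  field_simp; ring

lemma F_integrand_le {v y : ℝ} (hv : 0 < v) (hvy : v ≤ y) :
    stdNormalPDF (1 / v + v / 2) ≤ exp (-(1 / (2 * y ^ 2))) := by
  refine (stdNormalPDF_le_exp _).trans (exp_le_exp.mpr ?_)
  have hvy' : 1 / (2 * y ^ 2) ≤ 1 / (2 * v ^ 2) :=
    one_div_le_one_div_of_le (by positivity) (by nlinarith)
  rw [neg_div, sq_one_div_add_half_div_two hv.ne']
  nlinarith [sq_nonneg v]

lemma one_div_two_mul_sub_cube_sq_le {y : ℝ} (h0 : 0 < y) (h2 : y ≤ 1 / 2) :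
    1 / (2 * (y - y ^ 3) ^ 2) ≤ 1 / (2 * y ^ 2) + 4 := by
  have hy2 : y ^ 2 ≤ 1 / 4 := by nlinarith
  have ha : 0 < y - y ^ 3 := by nlinarith [mul_le_mul_of_nonneg_left hy2 h0.le]
  have hrw : 1 / (2 * y ^ 2) + 4 = (1 + 8 * y ^ 2) / (2 * y ^ 2) := by field_simp; ring
  rw [hrw, div_le_div_iff₀ (by positivity) (by positivity)]
  have h6 : 0 ≤ 6 - 15 * y ^ 2 + 8 * y ^ 4 := by nlinarith [sq_nonneg (y ^ 2)]
  nlinarith [mul_nonneg (mul_nonneg (sq_nonneg y) (sq_nonneg y)) h6]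

lemma exp_le_F_integrand {v y : ℝ} (hy0 : 0 < y) (hy : y ≤ 1 / 2) (hv : y - y ^ 3 ≤ v)
    (hvy : v ≤ y) : exp (-(1 / (2 * y ^ 2)) - 8) ≤ stdNormalPDF (1 / v + v / 2) := by
  have ha : 0 < y - y ^ 3 := by nlinarith [pow_le_pow_left₀ hy0.le hy 2]
  have hva : 1 / (2 * v ^ 2) ≤ 1 / (2 * (y - y ^ 3) ^ 2) :=
    one_div_le_one_div_of_le (by positivity) (by nlinarith)
  refine le_trans (exp_le_exp.mpr ?_) (exp_sub_one_le_stdNormalPDF _)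
  rw [neg_div, sq_one_div_add_half_div_two (ha.trans_le hv).ne']
  nlinarith [one_div_two_mul_sub_cube_sq_le hy0 hy]

lemma F_le {y : ℝ} (hy : 0 < y) : F y ≤ exp (-(1 / (2 * y ^ 2))) * y := by
  have := intervalIntegral.integral_mono_on_of_le_Ioo hy.le (intervalIntegrable_F_integrand 0 y)
    intervalIntegrable_const fun v hv ↦ F_integrand_le hv.1 hv.2.le
  simpa [F, mul_comm] using this

lemma exp_mul_cube_le_F {y : ℝ} (hy0 : 0 < y) (hy : y ≤ 1 / 2) :
    exp (-(1 / (2 * y ^ 2)) - 8) * y ^ 3 ≤ F y := by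
  have hsub : y - y ^ 3 ≤ y := by nlinarith [pow_pos hy0 3]
  have hint := intervalIntegral.integral_mono_on hsub intervalIntegrable_const
    (intervalIntegrable_F_integrand _ _) fun v hv ↦ exp_le_F_integrand hy0 hy hv.1 hv.2
  rw [intervalIntegral.integral_const, smul_eq_mul, ← F_sub_F, sub_sub_cancel] at hint
  have : 0 ≤ F (y - y ^ 3) := F_nonneg (by nlinarith [pow_le_pow_left₀ hy0.le hy 2])
  linarith

lemma F_pos {y : ℝ} (hy0 : 0 < y) (hy : y ≤ 1 / 2) : 0 < F y :=
  (by positivity : 0 < exp _ * y ^ 3).trans_le (exp_mul_cube_le_F hy0 hy)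

lemma one_div_two_sq_le_log_one_div_F {y : ℝ} (hy0 : 0 < y) (hy : y ≤ 1 / 2) :
    1 / (2 * y ^ 2) ≤ log (1 / F y) := by
  have hF : 0 < F y := F_pos hy0 hy
  rw [le_log_iff_exp_le (by positivity), le_one_div (exp_pos _) hF, one_div, ← exp_neg]
  calc F y ≤ exp (-(1 / (2 * y ^ 2))) * y := F_le hy0
    _ ≤ exp (-(1 / (2 * y ^ 2))) := mul_le_of_le_one_right (exp_pos _).le (by linarith)

lemma log_one_div_F_le {y : ℝ} (hy0 : 0 < y) (hy : y ≤ 1 / 2) :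
    log (1 / F y) ≤ 1 / (2 * y ^ 2) + 8 + 3 * log (1 / y) := by
  have hpos : 0 < exp (-(1 / (2 * y ^ 2)) - 8) * y ^ 3 := by positivity
  calc log (1 / F y) ≤ log (1 / (exp (-(1 / (2 * y ^ 2)) - 8) * y ^ 3)) :=
        log_le_log (one_div_pos.mpr (F_pos hy0 hy))
          (one_div_le_one_div_of_le hpos (exp_mul_cube_le_F hy0 hy))
    _ = 1 / (2 * y ^ 2) + 8 + 3 * log (1 / y) := by
        rw [one_div, log_inv, log_mul (exp_pos _).ne' (by positivity), log_exp, log_pow,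
          one_div y, log_inv]
        push_cast; ring

lemma abs_sub_one_div_two_sq_le_log {L y : ℝ} (hy : 0 < y) (he : exp 1 ≤ L)
    (hlo : 1 / (2 * y ^ 2) ≤ L) (hhi : L ≤ 1 / (2 * y ^ 2) + 8 + 3 * log (1 / y)) :
    |L - 1 / (2 * y ^ 2)| ≤ 11 * log L := by
  have hL : 0 < L := (exp_pos 1).trans_le he
  have hlogL : 1 ≤ log L := (le_log_iff_exp_le hL).mpr he
  have hy2 : (1 / y) ^ 2 ≤ 2 * L := by
    rw [div_pow, one_pow]
    have : 1 / (2 * y ^ 2) = 1 / y ^ 2 / 2 := by ring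
    linarith
  have hlogy := log_le_log (by positivity) hy2
  rw [log_pow, log_mul two_ne_zero hL.ne'] at hlogy
  push_cast at hlogy
  rw [abs_of_nonneg (by linarith)]
  linarith [log_two_lt_d9]

/-- `log(1/x) = 1/(2·G(x)²) + O(log log(1/x))` as `x → 0⁺`, where `G` inverts `F`. -/
theorem log_F_inv_asymptotics (G : ℝ → ℝ)
    (hGpos : ∀ x ∈ Set.Ioo 0 (1 / Real.exp 1), 0 < G x)
    (hG : ∀ x ∈ Set.Ioo 0 (1 / Real.exp 1), F (G x) = x) :
    (fun x : ℝ => Real.log (1 / x) - 1 / (2 * G x ^ 2))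
      =O[nhdsWithin 0 (Set.Ioi 0)]
        (fun x : ℝ => Real.log (Real.log (1 / x))) := by
  have hF : 0 < F (1 / 2) := F_pos (by norm_num) le_rfl
  refine Asymptotics.IsBigO.of_bound 11 ?_
  filter_upwards [Ioo_mem_nhdsGT (by positivity : (0 : ℝ) < 1 / exp 1), Ioo_mem_nhdsGT hF,
    Ioo_mem_nhdsGT (exp_pos (-exp 1))] with x hx hxF hxe
  have hy0 : 0 < G x := hGpos x hx
  have hFy : F (G x) = x := hG x hx
  generalize G x = y at hy0 hFy ⊢
  have hL : exp 1 ≤ log (1 / x) := by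
    rw [one_div, log_inv, le_neg, ← log_exp (-exp 1)]
    exact log_le_log hx.1 hxe.2.le
  rw [← hFy] at hxF hL
  have hy : y ≤ 1 / 2 := (F_mono.reflect_lt hxF.2).le
  rw [Real.norm_eq_abs, ← hFy]
  refine (abs_sub_one_div_two_sq_le_log hy0 hL (one_div_two_sq_le_log_one_div_F hy0 hy)
    (log_one_div_F_le hy0 hy)).trans ?_
  gcongr
  exact le_norm_self _
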